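/- Let T be a rooted binary tree of size n ≥ 5. Then T is reconstructable from its multideck: if T' is any rooted binary tree of size n with D^m(T') = D^m(T) as multisets, then T' is isomorphic to T (by a root-preserving isomorphism). -/

import Mathlib

/-- A rooted binary tree: every vertex has zero or two children. -/
inductive RBT : Type
  | leaf : RBT
  | node : RBT → RBT → RBT
deriving DecidableEq

namespace RBT

/-- Number of leaves. -/
def numLeaves : RBT → ℕ
  | leaf => 1
  | node l r => l.numLeaves + r.numLeaves

/-- Root-preserving isomorphism of rooted binary trees (children may be swapped). -/
inductive Iso : RBT → RBT → Prop
  | leaf : Iso leaf leaf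
  | node {a b c d : RBT} : Iso a c → Iso b d → Iso (node a b) (node c d)
  | swap {a b c d : RBT} : Iso a d → Iso b c → Iso (node a b) (node c d)

/-- The multideck of a tree: the multiset of induced subtrees obtained by deleting one leaf
(in every possible way) and suppressing the resulting degree-2 vertex. -/
def cards : RBT → Multiset RBT
  | leaf => 0
  | node l r =>
      (if l = leaf then {r} else l.cards.map (fun l' => node l' r)) +
      (if r = leaf then {l} else r.cards.map (fun r' => node l r'))

end RBT

/-!
Isomorphism classes of trees form the quotient `RBT.Shape`, and the hypothesis says that the decks
of `t` and `t'`, as multisets of shapes, coincide. Write `t = node A B` with `|B| ≤ |A|` and pool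
the two root subtrees of every card into one multiset `cardChildren t`; for non-leaf `A` and `B`
it is `deck A + |A|·B + deck B + |B|·A`. Because `n ≥ 5`, its number of single leaves is at least
`n - 1` if `B` is a leaf and at most `2` otherwise, so the deck knows whether `B` is a leaf.

If it is not, the largest size occurring is `|A|`, and the shapes of that size are `|A|·{A, B}`
when `|A| = |B|` and `|B|·A` otherwise; in the latter case `deck A` is then known, and the shapes
of size `|B|` that remain are the `|A|` copies of `B`.

If `B` is a leaf, the card `A` of `t` is a card of `t' = node A' leaf`, so `A ≅ A'` or
`A ≅ node C leaf` for a card `C` of `A'`, and symmetrically with `A` and `A'` exchanged. Deleting a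
leaf of a tree `X` lowers its external path length by at most `|X|`, with equality only when
`X ≅ node C leaf` for the resulting card `C`; comparing path lengths in both directions gives
`A ≅ A'`.
-/

theorem Multiset.filter_replicate {α : Type*} (p : α → Prop) [DecidablePred p] (n : ℕ) (a : α) :
    (replicate n a).filter p = if p a then replicate n a else 0 := by
  split_ifs with ha
  · exact filter_eq_self.2 fun _ hb => eq_of_mem_replicate hb ▸ ha
  · exact filter_eq_nil.2 fun _ hb => eq_of_mem_replicate hb ▸ ha

theorem Multiset.pair_eq_of_replicate_add_replicate_eq {α : Type*} {n : ℕ} {a b c d : α}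
    (hn : n ≠ 0) (h : replicate n a + replicate n b = replicate n c + replicate n d) :
    ({a, b} : Multiset α) = {c, d} := by
  simp only [← nsmul_singleton, ← nsmul_add] at h
  simpa only [insert_eq_cons, ← singleton_add] using nsmul_right_injective hn h

namespace RBT

theorem numLeaves_pos (t : RBT) : 0 < t.numLeaves := by
  induction t with
  | leaf => exact Nat.one_pos
  | node l r _ _ => simp only [numLeaves]; omega

theorem one_lt_numLeaves_iff {t : RBT} : 1 < t.numLeaves ↔ t ≠ leaf := by
  cases t with
  | leaf => simp [numLeaves]
  | node l r =>
    have := l.numLeaves_pos; have := r.numLeaves_pos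
    simp only [numLeaves, ne_eq, reduceCtorEq, not_false_eq_true, iff_true]; omega

namespace Iso

theorem refl (t : RBT) : Iso t t := by
  induction t with
  | leaf => exact .leaf
  | node _ _ hl hr => exact .node hl hr

theorem symm {s t : RBT} (h : Iso s t) : Iso t s := by
  induction h with
  | leaf => exact .leaf
  | node _ _ ih₁ ih₂ => exact .node ih₁ ih₂
  | swap _ _ ih₁ ih₂ => exact .swap ih₂ ih₁

theorem trans {s t u : RBT} (h : Iso s t) (h' : Iso t u) : Iso s u := by
  induction h generalizing u with
  | leaf => exact h'
  | node _ _ ih₁ ih₂ =>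
    cases h' with
    | node g₁ g₂ => exact .node (ih₁ g₁) (ih₂ g₂)
    | swap g₁ g₂ => exact .swap (ih₁ g₁) (ih₂ g₂)
  | swap _ _ ih₁ ih₂ =>
    cases h' with
    | node g₁ g₂ => exact .swap (ih₁ g₂) (ih₂ g₁)
    | swap g₁ g₂ => exact .node (ih₁ g₂) (ih₂ g₁)

theorem numLeaves_eq {s t : RBT} (h : Iso s t) : s.numLeaves = t.numLeaves := by
  induction h with
  | leaf => rfl
  | node _ _ ih₁ ih₂ => simp only [numLeaves, ih₁, ih₂]
  | swap _ _ ih₁ ih₂ => simp only [numLeaves, ih₁, ih₂]; omega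

end Iso

instance isoSetoid : Setoid RBT := ⟨Iso, ⟨Iso.refl, Iso.symm, Iso.trans⟩⟩

abbrev Shape := Quotient isoSetoid

theorem Iso.mk_eq {s t : RBT} (h : Iso s t) : (⟦s⟧ : Shape) = ⟦t⟧ := Quotient.sound h

theorem mk_eq_mk_leaf_iff {t : RBT} : (⟦t⟧ : Shape) = ⟦leaf⟧ ↔ t = leaf :=
  ⟨fun h => by cases Quotient.exact h; rfl, fun h => h ▸ rfl⟩

def childShapes : RBT → Multiset Shape
  | leaf => 0
  | node l r => {⟦l⟧, ⟦r⟧}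

namespace Shape

def size : Shape → ℕ := Quotient.lift numLeaves fun _ _ => Iso.numLeaves_eq

def node : Shape → Shape → Shape := Quotient.map₂ RBT.node fun _ _ h _ _ h' => Iso.node h h'

def children : Shape → Multiset Shape :=
  Quotient.lift childShapes fun _ _ h => by
    cases h with
    | leaf => rfl
    | node h₁ h₂ => simp only [childShapes, h₁.mk_eq, h₂.mk_eq]
    | swap h₁ h₂ => simp only [childShapes, h₁.mk_eq, h₂.mk_eq, Multiset.pair_comm]

@[simp] theorem size_mk (t : RBT) : size ⟦t⟧ = t.numLeaves := rfl

theorem node_comm (x y : Shape) : x.node y = y.node x :=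
  Quotient.inductionOn₂ x y fun a b => Quotient.sound (.swap (.refl a) (.refl b))

@[simp] theorem children_node (x y : Shape) : (x.node y).children = {x, y} :=
  Quotient.inductionOn₂ x y fun _ _ => rfl

theorem node_eq_node_of_pair_eq {x y z w : Shape} (h : ({x, y} : Multiset Shape) = {z, w}) :
    x.node y = z.node w := by
  simp only [Multiset.insert_eq_cons, Multiset.cons_eq_cons, Multiset.singleton_inj,
    Multiset.singleton_eq_cons_iff] at h
  rcases h with ⟨rfl, rfl⟩ | ⟨-, cs, ⟨rfl, rfl⟩, rfl, -⟩
  · rfl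
  · exact node_comm _ _

end Shape

theorem mk_node (l r : RBT) : (⟦node l r⟧ : Shape) = Shape.node ⟦l⟧ ⟦r⟧ := rfl

theorem mem_cards_node {l r C : RBT} : C ∈ cards (node l r) ↔
    (l = leaf ∧ C = r) ∨ (∃ l' ∈ cards l, C = node l' r) ∨
      (r = leaf ∧ C = l) ∨ (∃ r' ∈ cards r, C = node l r') := by
  rw [cards, Multiset.mem_add]
  split_ifs with hl hr hr <;> subst_vars <;> simp_all [cards, eq_comm]

theorem numLeaves_of_mem_cards {t C : RBT} (hC : C ∈ cards t) :
    C.numLeaves + 1 = t.numLeaves := by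
  induction t generalizing C with
  | leaf => simp [cards] at hC
  | node l r ihl ihr =>
    rcases mem_cards_node.1 hC with ⟨rfl, rfl⟩ | ⟨l', hl', rfl⟩ | ⟨rfl, rfl⟩ | ⟨r', hr', rfl⟩
    · simp only [numLeaves]; omega
    · have := ihl hl'; simp only [numLeaves]; omega
    · rfl
    · have := ihr hr'; simp only [numLeaves]; omega

def deck (t : RBT) : Multiset Shape := (cards t).map (⟦·⟧)

/-- The cards of `node l r` obtained by deleting a leaf of `l`. -/
def deckLeft (l r : RBT) : Multiset Shape :=
  if l = leaf then {⟦r⟧} else (deck l).map (·.node ⟦r⟧)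

theorem deck_node (l r : RBT) : deck (node l r) = deckLeft l r + deckLeft r l := by
  simp only [deck, cards, deckLeft, Multiset.map_add, apply_ite (Multiset.map _),
    Multiset.map_singleton, Multiset.map_map, Function.comp_def, mk_node, Shape.node_comm ⟦l⟧]

theorem deckLeft_congr {l r l' r' : RBT} (hl : Iso l l') (hr : Iso r r')
    (hdeck : deck l = deck l') : deckLeft l r = deckLeft l' r' := by
  have hleaf : l = leaf ↔ l' = leaf := by
    rw [← mk_eq_mk_leaf_iff, ← mk_eq_mk_leaf_iff, hl.mk_eq]
  simp only [deckLeft, hleaf, hdeck, hr.mk_eq]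

theorem deck_eq_of_iso {s t : RBT} (h : Iso s t) : deck s = deck t := by
  induction h with
  | leaf => rfl
  | node h₁ h₂ ih₁ ih₂ =>
    rw [deck_node, deck_node, deckLeft_congr h₁ h₂ ih₁, deckLeft_congr h₂ h₁ ih₂]
  | swap h₁ h₂ ih₁ ih₂ =>
    rw [deck_node, deck_node, deckLeft_congr h₁ h₂ ih₁, deckLeft_congr h₂ h₁ ih₂, add_comm]

theorem deck_eq_of_rel_cards {s t : RBT} (h : Multiset.Rel Iso (cards s) (cards t)) :
    deck s = deck t :=
  Multiset.rel_eq.1 <| Multiset.rel_map.2 <| h.mono fun _ _ _ _ => Iso.mk_eq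

theorem card_deckLeft (l r : RBT) : Multiset.card (deckLeft l r) = l.numLeaves := by
  induction l generalizing r with
  | leaf => rfl
  | node a b iha ihb =>
    rw [deckLeft, if_neg nofun, Multiset.card_map, deck_node, Multiset.card_add, iha, ihb]
    rfl

theorem card_deck {t : RBT} (ht : t ≠ leaf) : Multiset.card (deck t) = t.numLeaves := by
  obtain _ | ⟨l, r⟩ := t
  · exact absurd rfl ht
  · rw [deck_node, Multiset.card_add, card_deckLeft, card_deckLeft]
    rfl

theorem size_of_mem_deck {t : RBT} {s : Shape} (hs : s ∈ deck t) : s.size + 1 = t.numLeaves := by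
  obtain ⟨C, hC, rfl⟩ := Multiset.mem_map.1 hs
  exact numLeaves_of_mem_cards hC

theorem deck_node_of_ne_leaf {A B : RBT} (hA : A ≠ leaf) (hB : B ≠ leaf) :
    deck (node A B) = (deck A).map (·.node ⟦B⟧) + (deck B).map (·.node ⟦A⟧) := by
  rw [deck_node, deckLeft, deckLeft, if_neg hA, if_neg hB]

theorem deck_node_leaf {A : RBT} (hA : A ≠ leaf) :
    deck (node A leaf) = (deck A).map (·.node ⟦leaf⟧) + {⟦A⟧} := by
  rw [deck_node, deckLeft, deckLeft, if_neg hA, if_pos rfl]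

/-- The external path length: the sum of the depths of the leaves. -/
def pathLength : RBT → ℕ
  | leaf => 0
  | node l r => l.pathLength + r.pathLength + l.numLeaves + r.numLeaves

theorem Iso.pathLength_eq {s t : RBT} (h : Iso s t) : s.pathLength = t.pathLength := by
  induction h with
  | leaf => rfl
  | node h₁ h₂ ih₁ ih₂ => simp only [pathLength, ih₁, ih₂, h₁.numLeaves_eq, h₂.numLeaves_eq]
  | swap h₁ h₂ ih₁ ih₂ =>
    simp only [pathLength, ih₁, ih₂, h₁.numLeaves_eq, h₂.numLeaves_eq]; omega

/-- Deleting a leaf at depth `d` whose sibling subtree has `k` leaves lowers the path length by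
`d + k`, and the subtrees hanging off the path to that leaf show `d + k ≤ t.numLeaves`. -/
theorem pathLength_le_of_mem_cards {t C : RBT} (hC : C ∈ cards t) :
    t.pathLength ≤ (node C leaf).pathLength := by
  induction t generalizing C with
  | leaf => simp [cards] at hC
  | node l r ihl ihr =>
    have := l.numLeaves_pos; have := r.numLeaves_pos
    rcases mem_cards_node.1 hC with ⟨rfl, rfl⟩ | ⟨l', hl', rfl⟩ | ⟨rfl, rfl⟩ | ⟨r', hr', rfl⟩
    · simp only [pathLength, numLeaves]; omega
    · have := ihl hl'; have := numLeaves_of_mem_cards hl'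
      simp only [pathLength, numLeaves] at *; omega
    · simp only [pathLength, numLeaves]; omega
    · have := ihr hr'; have := numLeaves_of_mem_cards hr'
      simp only [pathLength, numLeaves] at *; omega

/-- Equality forces the path to the deleted leaf to be a caterpillar spine. -/
theorem iso_of_mem_cards_of_pathLength_eq {t C : RBT} (hC : C ∈ cards t)
    (h : t.pathLength = (node C leaf).pathLength) : Iso t (node C leaf) := by
  induction t generalizing C with
  | leaf => simp [cards] at hC
  | node l r ihl ihr =>
    have := l.numLeaves_pos; have := r.numLeaves_pos
    rcases mem_cards_node.1 hC with ⟨rfl, rfl⟩ | ⟨l', hl', rfl⟩ | ⟨rfl, rfl⟩ | ⟨r', hr', rfl⟩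
    · exact .swap .leaf (.refl C)
    · have := numLeaves_of_mem_cards hl'
      have hle := pathLength_le_of_mem_cards hl'
      simp only [pathLength, numLeaves] at h hle
      obtain rfl : r = leaf := by
        by_contra hr; have := one_lt_numLeaves_iff.2 hr; omega
      exact .node (ihl hl' (by simp only [pathLength, numLeaves]; omega)) .leaf
    · exact .refl _
    · have := numLeaves_of_mem_cards hr'
      have hle := pathLength_le_of_mem_cards hr'
      simp only [pathLength, numLeaves] at h hle
      obtain rfl : l = leaf := by
        by_contra hl; have := one_lt_numLeaves_iff.2 hl; omega
      exact .swap .leaf ((ihr hr' (by simp only [pathLength, numLeaves]; omega)).trans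
        (.swap (.refl r') .leaf))

theorem exists_mem_cards_of_mk_mem_deck_node_leaf {A A' : RBT} (hA' : A' ≠ leaf)
    (h : ⟦A⟧ ∈ deck (node A' leaf)) :
    (⟦A⟧ : Shape) = ⟦A'⟧ ∨ ∃ C ∈ cards A', Iso A (node C leaf) := by
  rw [deck_node_leaf hA', Multiset.mem_add, Multiset.mem_singleton, deck, Multiset.map_map,
    Multiset.mem_map] at h
  rcases h with ⟨C, hC, hAC⟩ | hAA'
  · exact .inr ⟨C, hC, Quotient.exact hAC.symm⟩
  · exact .inl hAA'

theorem mk_eq_of_deck_node_leaf_eq {A A' : RBT} (hA : A ≠ leaf) (hA' : A' ≠ leaf)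
    (h : deck (node A leaf) = deck (node A' leaf)) : (⟦A⟧ : Shape) = ⟦A'⟧ := by
  have hmem : ⟦A⟧ ∈ deck (node A' leaf) := by
    rw [← h, deck_node_leaf hA]; exact Multiset.mem_add.2 (.inr (Multiset.mem_singleton_self _))
  have hmem' : ⟦A'⟧ ∈ deck (node A leaf) := by
    rw [h, deck_node_leaf hA']; exact Multiset.mem_add.2 (.inr (Multiset.mem_singleton_self _))
  rcases exists_mem_cards_of_mk_mem_deck_node_leaf hA' hmem with hAA' | ⟨C, hC, hAC⟩
  · exact hAA'
  rcases exists_mem_cards_of_mk_mem_deck_node_leaf hA hmem' with hA'A | ⟨C', hC', hA'C'⟩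
  · exact hA'A.symm
  have h₁ := (pathLength_le_of_mem_cards hC).trans_eq hAC.pathLength_eq.symm
  have h₂ := (pathLength_le_of_mem_cards hC').trans_eq hA'C'.pathLength_eq.symm
  exact (hAC.trans (iso_of_mem_cards_of_pathLength_eq hC (by
    rw [← hAC.pathLength_eq]; omega)).symm).mk_eq

theorem filter_size_deck (t : RBT) (k : ℕ) :
    (deck t).filter (·.size = k) = if k + 1 = t.numLeaves then deck t else 0 := by
  split_ifs with hk
  · exact Multiset.filter_eq_self.2 fun s hs => by have := size_of_mem_deck hs; omega
  · exact Multiset.filter_eq_nil.2 fun s hs => by have := size_of_mem_deck hs; omega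

def cardChildren (t : RBT) : Multiset Shape := (deck t).bind Shape.children

theorem bind_children_map_node (M : Multiset Shape) (y : Shape) :
    (M.map (·.node y)).bind Shape.children = M + Multiset.replicate (Multiset.card M) y := by
  simp only [Multiset.bind_map, Shape.children_node, Multiset.insert_eq_cons, Multiset.bind_cons,
    Multiset.map_id', Multiset.bind_singleton, Multiset.map_const']

theorem cardChildren_node_of_ne_leaf {A B : RBT} (hA : A ≠ leaf) (hB : B ≠ leaf) :
    cardChildren (node A B) = deck A + Multiset.replicate A.numLeaves ⟦B⟧ +
      (deck B + Multiset.replicate B.numLeaves ⟦A⟧) := by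
  rw [cardChildren, deck_node_of_ne_leaf hA hB, Multiset.add_bind, bind_children_map_node,
    bind_children_map_node, card_deck hA, card_deck hB]

theorem cardChildren_node_leaf {A : RBT} (hA : A ≠ leaf) :
    cardChildren (node A leaf) = deck A + Multiset.replicate A.numLeaves ⟦leaf⟧ +
      Shape.children ⟦A⟧ := by
  rw [cardChildren, deck_node_leaf hA, Multiset.add_bind, bind_children_map_node, card_deck hA,
    Multiset.singleton_bind]

theorem filter_size_cardChildren {A B : RBT} (hA : A ≠ leaf) (hB : B ≠ leaf) (k : ℕ) :
    (cardChildren (node A B)).filter (·.size = k) =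
      (if k + 1 = A.numLeaves then deck A else 0) +
        (if B.numLeaves = k then Multiset.replicate A.numLeaves ⟦B⟧ else 0) +
      ((if k + 1 = B.numLeaves then deck B else 0) +
        (if A.numLeaves = k then Multiset.replicate B.numLeaves ⟦A⟧ else 0)) := by
  simp only [cardChildren_node_of_ne_leaf hA hB, Multiset.filter_add, filter_size_deck,
    Multiset.filter_replicate, Shape.size_mk]
  rfl

theorem numLeaves_le_card_filter_size_cardChildren {A : RBT} (hA : A ≠ leaf) :
    A.numLeaves ≤ Multiset.card ((cardChildren (node A leaf)).filter (·.size = 1)) := by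
  rw [cardChildren_node_leaf hA, Multiset.filter_add, Multiset.filter_add,
    Multiset.filter_replicate]
  simp only [Shape.size_mk, numLeaves, if_true, Multiset.card_add, Multiset.card_replicate]
  omega

theorem card_filter_size_cardChildren_le_two {A B : RBT} (hA : 3 ≤ A.numLeaves)
    (hB : B ≠ leaf) : Multiset.card ((cardChildren (node A B)).filter (·.size = 1)) ≤ 2 := by
  have hA₀ : A ≠ leaf := one_lt_numLeaves_iff.1 (by omega)
  have hA₁ : A.numLeaves ≠ 1 := by omega
  have hA₂ : ¬1 + 1 = A.numLeaves := by omega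
  have hB₁ : B.numLeaves ≠ 1 := (one_lt_numLeaves_iff.2 hB).ne'
  simp only [filter_size_cardChildren hA₀ hB, hA₁, hA₂, hB₁, if_false, zero_add, add_zero]
  split_ifs with hB₂
  · rw [card_deck hB]; omega
  · rw [Multiset.card_zero]; omega

theorem deck_node_leaf_ne {A A' B' : RBT} (hA : 3 ≤ A.numLeaves) (hA' : 3 ≤ A'.numLeaves)
    (hB' : B' ≠ leaf) : deck (node A leaf) ≠ deck (node A' B') := by
  intro h
  have hA₀ : A ≠ leaf := one_lt_numLeaves_iff.1 (by omega)
  have hge := numLeaves_le_card_filter_size_cardChildren hA₀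
  have hle := card_filter_size_cardChildren_le_two hA' hB'
  rw [cardChildren, h] at hge
  rw [cardChildren] at hle
  omega

theorem sup_size_cardChildren {A B : RBT} (hA : A ≠ leaf) (hB : B ≠ leaf)
    (hle : B.numLeaves ≤ A.numLeaves) :
    ((cardChildren (node A B)).map Shape.size).sup = A.numLeaves := by
  rw [cardChildren_node_of_ne_leaf hA hB]
  apply le_antisymm
  · refine Multiset.sup_le.2 fun k hk => ?_
    obtain ⟨s, hs, rfl⟩ := Multiset.mem_map.1 hk
    simp only [Multiset.mem_add, Multiset.mem_replicate] at hs
    rcases hs with (hs | ⟨-, rfl⟩) | (hs | ⟨-, rfl⟩)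
    · have := size_of_mem_deck hs; omega
    · exact hle
    · have := size_of_mem_deck hs; omega
    · exact le_rfl
  · refine Multiset.le_sup (Multiset.mem_map.2 ⟨⟦A⟧, ?_, rfl⟩)
    simp [Multiset.mem_replicate, (numLeaves_pos B).ne']

theorem mk_node_eq_of_cardChildren_eq_of_numLeaves_eq {A B A' B' : RBT}
    (hA : A ≠ leaf) (hB : B ≠ leaf) (hA' : A' ≠ leaf) (hB' : B' ≠ leaf)
    (hAB : B.numLeaves = A.numLeaves) (hAB' : B'.numLeaves = A'.numLeaves)
    (hAA' : A.numLeaves = A'.numLeaves)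
    (h : cardChildren (node A B) = cardChildren (node A' B')) :
    (⟦node A B⟧ : Shape) = ⟦node A' B'⟧ := by
  have hlayer := congrArg (·.filter (·.size = A.numLeaves)) h
  simp only [filter_size_cardChildren hA hB, filter_size_cardChildren hA' hB', hAB, hAB', hAA',
    Nat.succ_ne_self, if_true, if_false, zero_add] at hlayer
  rw [mk_node, mk_node, Shape.node_comm, Shape.node_comm ⟦A'⟧]
  exact Shape.node_eq_node_of_pair_eq
    (Multiset.pair_eq_of_replicate_add_replicate_eq (numLeaves_pos A').ne' hlayer)

theorem mk_node_eq_of_cardChildren_eq_of_numLeaves_lt {A B A' B' : RBT}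
    (hA : A ≠ leaf) (hB : B ≠ leaf) (hA' : A' ≠ leaf) (hB' : B' ≠ leaf)
    (hlt : B.numLeaves < A.numLeaves) (hAA' : A.numLeaves = A'.numLeaves)
    (hBB' : B.numLeaves = B'.numLeaves)
    (h : cardChildren (node A B) = cardChildren (node A' B')) :
    (⟦node A B⟧ : Shape) = ⟦node A' B'⟧ := by
  have hAB : A.numLeaves + 1 ≠ B.numLeaves := by omega
  have hlayerA := congrArg (·.filter (·.size = A.numLeaves)) h
  simp only [filter_size_cardChildren hA hB, filter_size_cardChildren hA' hB', ← hAA', ← hBB',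
    hlt.ne, hAB, Nat.succ_ne_self, if_true, if_false, zero_add] at hlayerA
  have hAeq : (⟦A⟧ : Shape) = ⟦A'⟧ := (Multiset.replicate_right_inj (numLeaves_pos B).ne').1 hlayerA
  have hlayerB := congrArg (·.filter (·.size = B.numLeaves)) h
  simp only [filter_size_cardChildren hA hB, filter_size_cardChildren hA' hB', ← hAA', ← hBB',
    hlt.ne', Nat.succ_ne_self, deck_eq_of_iso (Quotient.exact hAeq), if_true, if_false,
    add_zero, add_right_inj] at hlayerB
  have hBeq : (⟦B⟧ : Shape) = ⟦B'⟧ := (Multiset.replicate_right_inj (numLeaves_pos A).ne').1 hlayerB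
  rw [mk_node, mk_node, hAeq, hBeq]

theorem mk_node_eq_of_deck_eq_of_ne_leaf {A B A' B' : RBT} (hB : B ≠ leaf) (hB' : B' ≠ leaf)
    (hle : B.numLeaves ≤ A.numLeaves) (hle' : B'.numLeaves ≤ A'.numLeaves)
    (hsize : (node A B).numLeaves = (node A' B').numLeaves)
    (h : deck (node A B) = deck (node A' B')) : (⟦node A B⟧ : Shape) = ⟦node A' B'⟧ := by
  have hA : A ≠ leaf := one_lt_numLeaves_iff.1 ((one_lt_numLeaves_iff.2 hB).trans_le hle)
  have hA' : A' ≠ leaf := one_lt_numLeaves_iff.1 ((one_lt_numLeaves_iff.2 hB').trans_le hle')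
  have hM : cardChildren (node A B) = cardChildren (node A' B') := by unfold cardChildren; rw [h]
  have hAA' : A.numLeaves = A'.numLeaves := by
    rw [← sup_size_cardChildren hA hB hle, hM, sup_size_cardChildren hA' hB' hle']
  simp only [numLeaves] at hsize
  rcases hle.eq_or_lt with hAB | hAB
  · exact mk_node_eq_of_cardChildren_eq_of_numLeaves_eq hA hB hA' hB' hAB (by omega) hAA' hM
  · exact mk_node_eq_of_cardChildren_eq_of_numLeaves_lt hA hB hA' hB' hAB hAA' (by omega) hM

theorem mk_node_eq_of_deck_eq {A B A' B' : RBT} (hn : 5 ≤ (node A B).numLeaves)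
    (hle : B.numLeaves ≤ A.numLeaves) (hle' : B'.numLeaves ≤ A'.numLeaves)
    (hsize : (node A B).numLeaves = (node A' B').numLeaves)
    (h : deck (node A B) = deck (node A' B')) : (⟦node A B⟧ : Shape) = ⟦node A' B'⟧ := by
  simp only [numLeaves] at hn
  by_cases hB : B = leaf <;> by_cases hB' : B' = leaf
  · subst hB hB'
    simp only [numLeaves] at hsize
    have hA : A ≠ leaf := one_lt_numLeaves_iff.1 (by omega)
    have hA' : A' ≠ leaf := one_lt_numLeaves_iff.1 (by omega)
    rw [mk_node, mk_node, mk_eq_of_deck_node_leaf_eq hA hA' h]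
  · subst hB
    simp only [numLeaves] at hsize hn
    exact absurd h (deck_node_leaf_ne (by omega) (by omega) hB')
  · subst hB'
    simp only [numLeaves] at hsize hle
    exact absurd h.symm (deck_node_leaf_ne (by omega) (by omega) hB)
  · exact mk_node_eq_of_deck_eq_of_ne_leaf hB hB' hle hle' hsize h

theorem exists_iso_node_le {t : RBT} (ht : t ≠ leaf) :
    ∃ A B, Iso t (node A B) ∧ B.numLeaves ≤ A.numLeaves := by
  obtain _ | ⟨l, r⟩ := t
  · exact absurd rfl ht
  rcases le_total r.numLeaves l.numLeaves with h | h
  · exact ⟨l, r, .refl _, h⟩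
  · exact ⟨r, l, .swap (.refl l) (.refl r), h⟩

end RBT

/-- Trees of size n ≥ 5 are reconstructable from their multidecks: if two trees
of size n ≥ 5 have equal multidecks (as multisets of isomorphism classes), they are
isomorphic. -/
theorem tree_reconstruction (n : ℕ) (hn : 5 ≤ n) (t t' : RBT)
    (ht : t.numLeaves = n) (ht' : t'.numLeaves = n)
    (h : Multiset.Rel RBT.Iso t'.cards t.cards) :
    RBT.Iso t' t := by
  obtain ⟨A, B, htAB, hle⟩ :=
    RBT.exists_iso_node_le (t := t) (RBT.one_lt_numLeaves_iff.1 (by omega))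
  obtain ⟨A', B', htAB', hle'⟩ :=
    RBT.exists_iso_node_le (t := t') (RBT.one_lt_numLeaves_iff.1 (by omega))
  have hdeck : (A'.node B').deck = (A.node B).deck := by
    rw [← RBT.deck_eq_of_iso htAB, ← RBT.deck_eq_of_iso htAB', RBT.deck_eq_of_rel_cards h]
  have hshape := RBT.mk_node_eq_of_deck_eq (by rw [← htAB'.numLeaves_eq]; omega) hle' hle
    (by rw [← htAB.numLeaves_eq, ← htAB'.numLeaves_eq, ht, ht']) hdeck
  exact Quotient.exact (htAB'.mk_eq.trans (hshape.trans htAB.mk_eq.symm))
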